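/- Let x₀ > 0, M > 0, C₀ > 0, and let W : (0, ∞) → ℝ be three times continuously differentiable with: |W(x)| ≤ C₀ (1 + |log x|) e^{−x/8}, |W'(x)| ≤ C₀ x^{−1} e^{−x/8}, and |W''(x)| ≤ C₀ x^{−2} e^{−x/8} for all x > 0; W''(x) ≥ 0 for all x ∈ (0, x₀]; ∫_{x₀}^∞ |W'''(x)| dx < ∞; and −W'(x₀) − (1/M)( |W''(x₀)| + ∫_{x₀}^∞ |W'''(x)| dx ) ≥ 0. Then for every ξ ≥ M, ∫_0^∞ W(x) cos(xξ) dx ≥ 0. -/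

import Mathlib

/-!
Write `I = ∫₀^∞ W(x) cos(xξ) dx`. Integrating by parts twice (against `sin(xξ)`, then against
`1 - cos(xξ)`) gives `ξ² I = ∫₀^∞ W''(x) (1 - cos(xξ)) dx`; the decay bounds make every boundary
term vanish at `0` and at `∞`. On `(0, x₀]` the integrand is nonnegative by convexity. On
`(x₀, ∞)` it equals `-W'(x₀) - ∫ W'' cos(xξ)`, and a third integration by parts bounds
`|ξ ∫_{x₀}^∞ W'' cos(xξ)|` by `B = |W''(x₀)| + ∫_{x₀}^∞ |W'''|`. Hence
`ξ³ I ≥ -ξ W'(x₀) - B ≥ ξ (-W'(x₀) - B / M) ≥ 0` for `ξ ≥ M`.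
-/

open MeasureTheory Real Set Filter Topology

lemma ContDiffOn.hasDerivAt_deriv {𝕜 F : Type*} [NontriviallyNormedField 𝕜] [NormedAddCommGroup F]
    [NormedSpace 𝕜 F] {f : 𝕜 → F} {s : Set 𝕜} {n : WithTop ℕ∞} (hf : ContDiffOn 𝕜 n f s)
    (hs : IsOpen s) (hn : n ≠ 0) {x : 𝕜} (hx : x ∈ s) : HasDerivAt f (deriv f x) x :=
  ((hf.differentiableOn hn).differentiableAt (hs.mem_nhds hx)).hasDerivAt

lemma MeasureTheory.IntegrableOn.of_norm_le {α : Type*} [MeasurableSpace α] {μ : Measure α}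
    {f g : α → ℝ} {s : Set α} (hs : MeasurableSet s) (hg : IntegrableOn g s μ)
    (hf : AEStronglyMeasurable f (μ.restrict s)) (h : ∀ x ∈ s, ‖f x‖ ≤ g x) :
    IntegrableOn f s μ :=
  Integrable.mono' hg hf ((ae_restrict_iff' hs).2 (ae_of_all _ h))

lemma abs_one_sub_cos_le_two (t : ℝ) : |1 - cos t| ≤ 2 := by
  rw [abs_le]; constructor <;> linarith [neg_one_le_cos t, cos_le_one t]

lemma abs_one_sub_cos_le_sq_div_two (t : ℝ) : |1 - cos t| ≤ t ^ 2 / 2 := by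
  rw [abs_of_nonneg (sub_nonneg.2 (cos_le_one t))]
  linarith [one_sub_sq_div_two_le_cos (x := t)]

lemma integrableOn_exp_neg_div (a : ℝ) {b : ℝ} (hb : 0 < b) :
    IntegrableOn (fun x => exp (-x / b)) (Ioi a) := by
  simpa only [div_eq_inv_mul, neg_mul, mul_neg] using exp_neg_integrableOn_Ioi a (inv_pos.2 hb)

lemma integrableOn_rpow_mul_exp_neg_div {s b : ℝ} (hs : -1 < s) (hb : 0 < b) :
    IntegrableOn (fun x => x ^ s * exp (-x / b)) (Ioi 0) := by
  simpa only [rpow_one, div_eq_inv_mul, neg_mul, mul_neg] using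
    integrableOn_rpow_mul_exp_neg_mul_rpow hs one_pos (inv_pos.2 hb)

lemma abs_log_le_rpow_add_rpow {x : ℝ} (hx : 0 < x) :
    |log x| ≤ 2 * x ^ (1 / 2 : ℝ) + 2 * x ^ (-(1 / 2) : ℝ) := by
  have hpos := log_le_rpow_div hx.le (by norm_num : (0 : ℝ) < 1 / 2)
  have hneg := log_le_rpow_div (inv_pos.2 hx).le (by norm_num : (0 : ℝ) < 1 / 2)
  rw [log_inv, inv_rpow hx.le, ← rpow_neg hx.le] at hneg
  have := rpow_pos_of_pos hx (1 / 2 : ℝ)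
  have := rpow_pos_of_pos hx (-(1 / 2) : ℝ)
  rw [abs_le]
  constructor <;> linarith

lemma integrableOn_one_add_abs_log_mul_exp_neg_div {b : ℝ} (hb : 0 < b) :
    IntegrableOn (fun x => (1 + |log x|) * exp (-x / b)) (Ioi 0) := by
  have hg : IntegrableOn (fun x => x ^ (0 : ℝ) * exp (-x / b)
      + 2 * (x ^ (1 / 2 : ℝ) * exp (-x / b)) + 2 * (x ^ (-(1 / 2) : ℝ) * exp (-x / b))) (Ioi 0) :=
    ((integrableOn_rpow_mul_exp_neg_div (by norm_num) hb).add
      ((integrableOn_rpow_mul_exp_neg_div (by norm_num) hb).const_mul 2)).add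
      ((integrableOn_rpow_mul_exp_neg_div (by norm_num) hb).const_mul 2)
  refine hg.of_norm_le measurableSet_Ioi (by fun_prop) fun x hx => ?_
  have hlog := abs_log_le_rpow_add_rpow hx
  rw [norm_of_nonneg (by positivity), rpow_zero]
  nlinarith [exp_pos (-x / b)]

section DecayBounds

variable {f : ℝ → ℝ} {C b ξ : ℝ}

lemma integrableOn_mul_sin_of_abs_le_inv_mul_exp (hb : 0 < b)
    (hf : AEStronglyMeasurable f (volume.restrict (Ioi 0)))
    (h : ∀ x : ℝ, 0 < x → |f x| ≤ C * x⁻¹ * exp (-x / b)) :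
    IntegrableOn (fun x => f x * sin (x * ξ)) (Ioi 0) := by
  refine IntegrableOn.of_norm_le measurableSet_Ioi
    ((integrableOn_exp_neg_div 0 hb).const_mul (C * |ξ|))
    (hf.mul (by fun_prop)) fun x (hx : 0 < x) => ?_
  calc ‖f x * sin (x * ξ)‖ ≤ C * x⁻¹ * exp (-x / b) * |x * ξ| :=
        norm_mul_le_of_le (h x hx) abs_sin_le_abs
    _ = C * |ξ| * exp (-x / b) := by
        rw [abs_mul, abs_of_pos hx]; field_simp

lemma integrableOn_mul_one_sub_cos_of_abs_le_inv_sq_mul_exp (hb : 0 < b)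
    (hf : AEStronglyMeasurable f (volume.restrict (Ioi 0)))
    (h : ∀ x : ℝ, 0 < x → |f x| ≤ C * x⁻¹ ^ 2 * exp (-x / b)) :
    IntegrableOn (fun x => f x * (1 - cos (x * ξ))) (Ioi 0) := by
  refine IntegrableOn.of_norm_le measurableSet_Ioi
    ((integrableOn_exp_neg_div 0 hb).const_mul (C * ξ ^ 2 / 2))
    (hf.mul (by fun_prop)) fun x (hx : 0 < x) => ?_
  calc ‖f x * (1 - cos (x * ξ))‖ ≤ C * x⁻¹ ^ 2 * exp (-x / b) * ((x * ξ) ^ 2 / 2) :=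
        norm_mul_le_of_le (h x hx) (abs_one_sub_cos_le_sq_div_two _)
    _ = C * ξ ^ 2 / 2 * exp (-x / b) := by
        field_simp

lemma integrableOn_Ioi_of_abs_le_inv_pow_mul_exp {a : ℝ} {n : ℕ} (ha : 0 < a) (hb : 0 < b)
    (hC : 0 ≤ C) (hf : AEStronglyMeasurable f (volume.restrict (Ioi a)))
    (h : ∀ x ∈ Ioi a, |f x| ≤ C * x⁻¹ ^ n * exp (-x / b)) :
    IntegrableOn f (Ioi a) := by
  refine IntegrableOn.of_norm_le measurableSet_Ioi
    ((integrableOn_exp_neg_div a hb).const_mul (C * a⁻¹ ^ n))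
    hf fun x (hx : a < x) => (h x hx).trans ?_
  have := inv_pos.2 (ha.trans hx)
  gcongr

lemma tendsto_mul_sin_of_abs_le_log_mul_exp
    (h : ∀ x : ℝ, 0 < x → |f x| ≤ C * (1 + |log x|) * exp (-x / b)) :
    Tendsto (fun x => f x * sin (x * ξ)) (𝓝[>] 0) (𝓝 0) := by
  have hg : Continuous fun x => C * |ξ| * ((|x| + |x * log x|) * exp (-x / b)) := by
    have := continuous_mul_log; fun_prop
  refine squeeze_zero_norm' (a := fun x => C * |ξ| * ((|x| + |x * log x|) * exp (-x / b))) ?_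
    (by simpa using (hg.tendsto 0).mono_left nhdsWithin_le_nhds)
  filter_upwards [self_mem_nhdsWithin] with x (hx : 0 < x)
  calc ‖f x * sin (x * ξ)‖ ≤ C * (1 + |log x|) * exp (-x / b) * |x * ξ| :=
        norm_mul_le_of_le (h x hx) abs_sin_le_abs
    _ = C * |ξ| * ((|x| + |x * log x|) * exp (-x / b)) := by
        rw [abs_mul x ξ, abs_mul x (log x)]; ring

lemma tendsto_mul_one_sub_cos_of_abs_le_inv_mul_exp
    (h : ∀ x : ℝ, 0 < x → |f x| ≤ C * x⁻¹ * exp (-x / b)) :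
    Tendsto (fun x => f x * (1 - cos (x * ξ))) (𝓝[>] 0) (𝓝 0) := by
  have hg : Continuous fun x => C * ξ ^ 2 / 2 * (x * exp (-x / b)) := by fun_prop
  refine squeeze_zero_norm' ?_ (by simpa using (hg.tendsto 0).mono_left nhdsWithin_le_nhds)
  filter_upwards [self_mem_nhdsWithin] with x (hx : 0 < x)
  calc ‖f x * (1 - cos (x * ξ))‖ ≤ C * x⁻¹ * exp (-x / b) * ((x * ξ) ^ 2 / 2) :=
        norm_mul_le_of_le (h x hx) (abs_one_sub_cos_le_sq_div_two _)
    _ = C * ξ ^ 2 / 2 * (x * exp (-x / b)) := by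
        field_simp

end DecayBounds

lemma MeasureTheory.IntegrableOn.mul_cos_mul {f : ℝ → ℝ} {s : Set ℝ} (hf : IntegrableOn f s)
    (ξ : ℝ) : IntegrableOn (fun x => f x * cos (x * ξ)) s :=
  Integrable.mul_bdd hf (by fun_prop) (ae_of_all _ fun _ => abs_cos_le_one _)

lemma MeasureTheory.IntegrableOn.mul_sin_mul {f : ℝ → ℝ} {s : Set ℝ} (hf : IntegrableOn f s)
    (ξ : ℝ) : IntegrableOn (fun x => f x * sin (x * ξ)) s :=
  Integrable.mul_bdd hf (by fun_prop) (ae_of_all _ fun _ => abs_sin_le_one _)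

section IntegrationByParts

variable {u u' : ℝ → ℝ} {a ξ : ℝ}

lemma mul_integral_Ioi_mul_cos_eq {ℓ : ℝ} (hu : ∀ x ∈ Ioi a, HasDerivAt u (u' x) x)
    (hcos : IntegrableOn (fun x => u x * cos (x * ξ)) (Ioi a))
    (hsin : IntegrableOn (fun x => u' x * sin (x * ξ)) (Ioi a))
    (h_zero : Tendsto (fun x => u x * sin (x * ξ)) (𝓝[>] a) (𝓝 ℓ))
    (h_infty : Tendsto (fun x => u x * sin (x * ξ)) atTop (𝓝 0)) :
    ξ * ∫ x in Ioi a, u x * cos (x * ξ) = -ℓ - ∫ x in Ioi a, u' x * sin (x * ξ) := by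
  have hv : ∀ x ∈ Ioi a, HasDerivAt (fun y => sin (y * ξ)) (cos (x * ξ) * ξ) x := fun x _ => by
    simpa using ((hasDerivAt_id x).mul_const ξ).sin
  have hcos' : IntegrableOn (fun x => u x * (cos (x * ξ) * ξ)) (Ioi a) := by
    simpa only [IntegrableOn, mul_assoc] using hcos.mul_const ξ
  calc ξ * ∫ x in Ioi a, u x * cos (x * ξ) = ∫ x in Ioi a, u x * (cos (x * ξ) * ξ) := by
        rw [← integral_const_mul]; congr 1; ext x; ring
    _ = -ℓ - ∫ x in Ioi a, u' x * sin (x * ξ) := by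
        rw [integral_Ioi_mul_deriv_eq_deriv_mul hu hv hcos' hsin h_zero h_infty, zero_sub]

lemma abs_mul_integral_Ioi_mul_cos_le (hu : ∀ x ∈ Ici a, HasDerivAt u (u' x) x)
    (hu_int : IntegrableOn u (Ioi a)) (hu'_int : IntegrableOn u' (Ioi a)) :
    |ξ * ∫ x in Ioi a, u x * cos (x * ξ)| ≤ |u a| + ∫ x in Ioi a, |u' x| := by
  have hu_Ioi : ∀ x ∈ Ioi a, HasDerivAt u (u' x) x := fun x hx => hu x (Ioi_subset_Ici_self hx)
  have h_infty : Tendsto u atTop (𝓝 0) :=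
    tendsto_zero_of_hasDerivAt_of_integrableOn_Ioi hu_Ioi hu'_int hu_int
  have h_zero : Tendsto (fun x => u x * sin (x * ξ)) (𝓝[>] a) (𝓝 (u a * sin (a * ξ))) :=
    ((hu a self_mem_Ici).continuousAt.mul (by fun_prop)).tendsto.mono_left nhdsWithin_le_nhds
  rw [mul_integral_Ioi_mul_cos_eq hu_Ioi (hu_int.mul_cos_mul ξ) (hu'_int.mul_sin_mul ξ) h_zero
    (h_infty.zero_mul_isBoundedUnder_le (isBoundedUnder_of ⟨1, fun _ => abs_sin_le_one _⟩))]
  refine (abs_sub _ _).trans (add_le_add ?_ ?_)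
  · rw [abs_neg, abs_mul]
    exact mul_le_of_le_one_right (abs_nonneg _) (abs_sin_le_one _)
  · rw [← norm_eq_abs]
    refine norm_integral_le_of_norm_le hu'_int.abs (ae_of_all _ fun x => ?_)
    rw [norm_mul, norm_eq_abs, norm_eq_abs]
    exact mul_le_of_le_one_right (abs_nonneg _) (abs_sin_le_one _)

lemma mul_integral_Ioi_mul_sin_le (ha : 0 < a) (hu : ∀ x ∈ Ioi 0, HasDerivAt u (u' x) x)
    (hu'_nonneg : ∀ x ∈ Ioc 0 a, 0 ≤ u' x)
    (hsin : IntegrableOn (fun x => u x * sin (x * ξ)) (Ioi 0))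
    (hcos : IntegrableOn (fun x => u' x * (1 - cos (x * ξ))) (Ioi 0))
    (hu'_int : IntegrableOn u' (Ioi a))
    (h_zero : Tendsto (fun x => u x * (1 - cos (x * ξ))) (𝓝[>] 0) (𝓝 0))
    (h_infty : Tendsto u atTop (𝓝 0)) :
    ξ * ∫ x in Ioi 0, u x * sin (x * ξ) ≤ u a + ∫ x in Ioi a, u' x * cos (x * ξ) := by
  have hv : ∀ x ∈ Ioi (0 : ℝ), HasDerivAt (fun y => 1 - cos (y * ξ)) (sin (x * ξ) * ξ) x :=
    fun x _ => by simpa using (((hasDerivAt_id x).mul_const ξ).cos).const_sub 1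
  have hsin' : IntegrableOn (fun x => u x * (sin (x * ξ) * ξ)) (Ioi 0) := by
    simpa only [IntegrableOn, mul_assoc] using hsin.mul_const ξ
  have hibp : ξ * ∫ x in Ioi 0, u x * sin (x * ξ) = -∫ x in Ioi 0, u' x * (1 - cos (x * ξ)) := by
    rw [← integral_const_mul]
    simp_rw [mul_comm ξ, mul_assoc]
    rw [integral_Ioi_mul_deriv_eq_deriv_mul hu hv hsin' hcos h_zero
      (h_infty.zero_mul_isBoundedUnder_le
        (isBoundedUnder_of ⟨2, fun _ => abs_one_sub_cos_le_two _⟩)),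
      sub_zero, zero_sub]
  have hsplit : ∫ x in Ioi 0, u' x * (1 - cos (x * ξ))
      = (∫ x in Ioc 0 a, u' x * (1 - cos (x * ξ))) + ∫ x in Ioi a, u' x * (1 - cos (x * ξ)) := by
    rw [← Ioc_union_Ioi_eq_Ioi ha.le]
    exact setIntegral_union (Ioc_disjoint_Ioi le_rfl) measurableSet_Ioi
      (hcos.mono_set Ioc_subset_Ioi_self) (hcos.mono_set (Ioi_subset_Ioi ha.le))
  have hconvex : 0 ≤ ∫ x in Ioc 0 a, u' x * (1 - cos (x * ξ)) :=
    setIntegral_nonneg measurableSet_Ioc fun x hx =>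
      mul_nonneg (hu'_nonneg x hx) (sub_nonneg.2 (cos_le_one _))
  have htail : ∫ x in Ioi a, u' x * (1 - cos (x * ξ))
      = -u a - ∫ x in Ioi a, u' x * cos (x * ξ) := by
    simp_rw [mul_one_sub]
    rw [integral_sub hu'_int (hu'_int.mul_cos_mul ξ), integral_Ioi_of_hasDerivAt_of_tendsto'
      (fun x hx => hu x (ha.trans_le hx)) hu'_int h_infty, zero_sub]
  linarith

end IntegrationByParts

theorem neg_mul_sub_le_pow_three_mul_integral_mul_cos {w w₁ w₂ w₃ : ℝ → ℝ} {a ξ : ℝ} (ha : 0 < a)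
    (hξ : 0 ≤ ξ) (hw : ∀ x ∈ Ioi 0, HasDerivAt w (w₁ x) x)
    (hw₁ : ∀ x ∈ Ioi 0, HasDerivAt w₁ (w₂ x) x) (hw₂ : ∀ x ∈ Ici a, HasDerivAt w₂ (w₃ x) x)
    (hw₂_nonneg : ∀ x ∈ Ioc 0 a, 0 ≤ w₂ x) (hw_int : IntegrableOn w (Ioi 0))
    (hw₁_sin : IntegrableOn (fun x => w₁ x * sin (x * ξ)) (Ioi 0))
    (hw₂_cos : IntegrableOn (fun x => w₂ x * (1 - cos (x * ξ))) (Ioi 0))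
    (hw₁_int : IntegrableOn w₁ (Ioi a)) (hw₂_int : IntegrableOn w₂ (Ioi a))
    (hw₃_int : IntegrableOn w₃ (Ioi a))
    (hw_zero : Tendsto (fun x => w x * sin (x * ξ)) (𝓝[>] 0) (𝓝 0))
    (hw₁_zero : Tendsto (fun x => w₁ x * (1 - cos (x * ξ))) (𝓝[>] 0) (𝓝 0)) :
    -ξ * w₁ a - (|w₂ a| + ∫ x in Ioi a, |w₃ x|) ≤ ξ ^ 3 * ∫ x in Ioi 0, w x * cos (x * ξ) := by
  have hw_top : Tendsto w atTop (𝓝 0) :=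
    tendsto_zero_of_hasDerivAt_of_integrableOn_Ioi (fun x hx => hw x (ha.trans hx)) hw₁_int
      (hw_int.mono_set (Ioi_subset_Ioi ha.le))
  have hw₁_top : Tendsto w₁ atTop (𝓝 0) :=
    tendsto_zero_of_hasDerivAt_of_integrableOn_Ioi (fun x hx => hw₁ x (ha.trans hx)) hw₂_int
      hw₁_int
  have hcos : ∫ x in Ioi 0, w₁ x * sin (x * ξ) = -(ξ * ∫ x in Ioi 0, w x * cos (x * ξ)) := by
    rw [mul_integral_Ioi_mul_cos_eq hw (hw_int.mul_cos_mul ξ) hw₁_sin hw_zero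
      (hw_top.zero_mul_isBoundedUnder_le (isBoundedUnder_of ⟨1, fun _ => abs_sin_le_one _⟩)),
      neg_zero, zero_sub, neg_neg]
  have hsin := mul_integral_Ioi_mul_sin_le ha hw₁ hw₂_nonneg hw₁_sin hw₂_cos hw₂_int hw₁_zero
    hw₁_top
  have htail := abs_mul_integral_Ioi_mul_cos_le (ξ := ξ) hw₂ hw₂_int hw₃_int
  calc -ξ * w₁ a - (|w₂ a| + ∫ x in Ioi a, |w₃ x|)
      ≤ -ξ * w₁ a - ξ * ∫ x in Ioi a, w₂ x * cos (x * ξ) := by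
        linarith [(le_abs_self _).trans htail]
    _ = -(ξ * (w₁ a + ∫ x in Ioi a, w₂ x * cos (x * ξ))) := by ring
    _ ≤ -(ξ * (ξ * ∫ x in Ioi 0, w₁ x * sin (x * ξ))) :=
        neg_le_neg (mul_le_mul_of_nonneg_left hsin hξ)
    _ = ξ ^ 3 * ∫ x in Ioi 0, w x * cos (x * ξ) := by rw [hcos]; ring

theorem neg_mul_deriv_sub_le_pow_three_mul_integral_mul_cos_of_decay {W : ℝ → ℝ} {a b C ξ : ℝ}
    (ha : 0 < a) (hb : 0 < b) (hC : 0 ≤ C) (hξ : 0 ≤ ξ) (hW : ContDiffOn ℝ 3 W (Ioi 0))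
    (hW0 : ∀ x : ℝ, 0 < x → |W x| ≤ C * (1 + |log x|) * exp (-x / b))
    (hW1 : ∀ x : ℝ, 0 < x → |deriv W x| ≤ C * x⁻¹ * exp (-x / b))
    (hW2 : ∀ x : ℝ, 0 < x → |deriv (deriv W) x| ≤ C * x⁻¹ ^ 2 * exp (-x / b))
    (hconv : ∀ x ∈ Ioc 0 a, 0 ≤ deriv (deriv W) x)
    (hW3int : IntegrableOn (fun x => |deriv (deriv (deriv W)) x|) (Ioi a)) :
    -ξ * deriv W a - (|deriv (deriv W) a| + ∫ x in Ioi a, |deriv (deriv (deriv W)) x|)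
      ≤ ξ ^ 3 * ∫ x in Ioi 0, W x * cos (x * ξ) := by
  have hW₁ : ContDiffOn ℝ 2 (deriv W) (Ioi 0) := hW.deriv_of_isOpen isOpen_Ioi (by norm_num)
  have hW₂ : ContDiffOn ℝ 1 (deriv (deriv W)) (Ioi 0) :=
    hW₁.deriv_of_isOpen isOpen_Ioi (by norm_num)
  exact neg_mul_sub_le_pow_three_mul_integral_mul_cos ha hξ
    (fun _ => hW.hasDerivAt_deriv isOpen_Ioi (by norm_num))
    (fun _ => hW₁.hasDerivAt_deriv isOpen_Ioi (by norm_num))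
    (fun _ hx => hW₂.hasDerivAt_deriv isOpen_Ioi (by norm_num) (ha.trans_le hx)) hconv
    (IntegrableOn.of_norm_le measurableSet_Ioi
      ((integrableOn_one_add_abs_log_mul_exp_neg_div hb).const_mul C)
      (hW.continuousOn.aestronglyMeasurable measurableSet_Ioi)
      fun x hx => (hW0 x hx).trans_eq (mul_assoc _ _ _))
    (integrableOn_mul_sin_of_abs_le_inv_mul_exp hb (measurable_deriv _).aestronglyMeasurable hW1)
    (integrableOn_mul_one_sub_cos_of_abs_le_inv_sq_mul_exp hb
      (measurable_deriv _).aestronglyMeasurable hW2)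
    (integrableOn_Ioi_of_abs_le_inv_pow_mul_exp (n := 1) ha hb hC
      (measurable_deriv _).aestronglyMeasurable fun x hx => by simpa using hW1 x (ha.trans hx))
    (integrableOn_Ioi_of_abs_le_inv_pow_mul_exp ha hb hC
      (measurable_deriv _).aestronglyMeasurable fun x hx => hW2 x (ha.trans hx))
    ((integrable_norm_iff (measurable_deriv _).aestronglyMeasurable).1 hW3int)
    (tendsto_mul_sin_of_abs_le_log_mul_exp hW0)
    (tendsto_mul_one_sub_cos_of_abs_le_inv_mul_exp hW1)

theorem cosine_transform_nonneg_of_convex_kernel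
    (x₀ M C₀ : ℝ) (hx₀ : 0 < x₀) (hM : 0 < M) (hC₀ : 0 < C₀)
    (W : ℝ → ℝ)
    (hW : ContDiffOn ℝ 3 W (Ioi (0 : ℝ)))
    (hW0 : ∀ x : ℝ, 0 < x → |W x| ≤ C₀ * (1 + |Real.log x|) * Real.exp (-x / 8))
    (hW1 : ∀ x : ℝ, 0 < x → |deriv W x| ≤ C₀ * x⁻¹ * Real.exp (-x / 8))
    (hW2 : ∀ x : ℝ, 0 < x → |deriv (deriv W) x| ≤ C₀ * x⁻¹ ^ 2 * Real.exp (-x / 8))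
    (hconv : ∀ x ∈ Ioc (0 : ℝ) x₀, 0 ≤ deriv (deriv W) x)
    (hW3int : IntegrableOn (fun x => |deriv (deriv (deriv W)) x|) (Ioi x₀))
    (hcond : 0 ≤ -deriv W x₀
        - (1 / M) * (|deriv (deriv W) x₀|
          + ∫ x in Ioi x₀, |deriv (deriv (deriv W)) x|)) :
    ∀ ξ : ℝ, M ≤ ξ → 0 ≤ ∫ x in Ioi (0 : ℝ), W x * Real.cos (x * ξ) := by
  intro ξ hξ
  have hξ0 : 0 < ξ := hM.trans_le hξ
  have key := neg_mul_deriv_sub_le_pow_three_mul_integral_mul_cos_of_decay hx₀ (by norm_num)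
    hC₀.le hξ0.le hW hW0 hW1 hW2 hconv hW3int
  set B := |deriv (deriv W) x₀| + ∫ x in Ioi x₀, |deriv (deriv (deriv W)) x|
  have hB : B ≤ ξ * (1 / M) * B := by
    rw [← div_eq_mul_one_div]
    exact le_mul_of_one_le_left (add_nonneg (abs_nonneg _) (integral_nonneg fun _ => abs_nonneg _))
      ((one_le_div hM).2 hξ)
  refine (mul_nonneg_iff_of_pos_left (pow_pos hξ0 3)).1 (le_trans ?_ key)
  calc 0 ≤ ξ * (-deriv W x₀ - 1 / M * B) := mul_nonneg hξ0.le hcond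
    _ ≤ -ξ * deriv W x₀ - B := by linarith
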